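/- arXiv:1907.00782 — 5 statements merged into one kernel-verified Lean document; each statement's English description precedes it below -/
import Mathlib

section
/- For every ε > 0, every pair of inputs t, t′ ∈ [−1,1], and every output x ∈ [−C, C], the Piecewise Mechanism's output density satisfies pdf(x | t) ≤ e^ε · pdf(x | t′); i.e., the Piecewise Mechanism satisfies ε-local differential privacy. -/
open Real

/-- `C` parameter of the Piecewise Mechanism. -/
noncomputable def pmC (ε : ℝ) : ℝ := (exp (ε / 2) + 1) / (exp (ε / 2) - 1)

/-- density value `p` of the Piecewise Mechanism. -/
noncomputable def pmP (ε : ℝ) : ℝ := (exp ε - exp (ε / 2)) / (2 * exp (ε / 2) + 2)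

/-- left endpoint `ℓ(t)` of the center piece. -/
noncomputable def pmL (ε t : ℝ) : ℝ := (pmC ε + 1) / 2 * t - (pmC ε - 1) / 2

/-- right endpoint `r(t)` of the center piece. -/
noncomputable def pmR (ε t : ℝ) : ℝ := pmL ε t + pmC ε - 1

/-- output probability density of the Piecewise Mechanism:
`p` on `[ℓ(t), r(t)]`, `p / e^ε` on the rest of `[-C, C]`, and `0` outside `[-C, C]`. -/
noncomputable def pmPdf (ε t x : ℝ) : ℝ :=
  if pmL ε t ≤ x ∧ x ≤ pmR ε t then pmP ε
  else if -pmC ε ≤ x ∧ x ≤ pmC ε then pmP ε / exp ε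
  else 0

/-- The Piecewise Mechanism satisfies ε-local differential privacy. -/
theorem stmt_0 (ε : ℝ) (hε : 0 < ε) (t t' : ℝ)
    (ht : t ∈ Set.Icc (-1 : ℝ) 1) (ht' : t' ∈ Set.Icc (-1 : ℝ) 1)
    (x : ℝ) (hx : x ∈ Set.Icc (-pmC ε) (pmC ε)) :
    pmPdf ε t x ≤ exp ε * pmPdf ε t' x := by
  have hp : 0 ≤ pmP ε := by
    apply div_nonneg
    · have : exp (ε / 2) ≤ exp ε := exp_le_exp.mpr (by linarith)
      linarith
    · positivity
  have he : 1 ≤ exp ε := one_le_exp hε.le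
  have hhx : -pmC ε ≤ x ∧ x ≤ pmC ε := ⟨hx.1, hx.2⟩
  unfold pmPdf
  split_ifs with h1 h2 h2 <;> try (exact absurd hhx ‹_›)
  · nlinarith
  · rw [mul_div_cancel₀ _ (exp_pos ε).ne']
  · calc pmP ε / exp ε ≤ pmP ε := by
          apply div_le_self hp he
      _ ≤ exp ε * pmP ε := by nlinarith
  · exact le_mul_of_one_le_left (div_nonneg hp (exp_pos ε).le) he
end

section
/- For every ε > 0 and every t ∈ [−1,1], the Piecewise Mechanism is unbiased: ∫_{−C}^{C} x · pdf(x | t) dx = t. -/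
open Real

/-! The density is constant on each of `[-C, ℓ]`, `[ℓ, r]`, `[r, C]`, so the first moment is
`(p - p e^{-ε}) (r² - ℓ²) / 2 = (p - p e^{-ε}) (C² - 1) t / 2`. With `s = e^{ε/2}` one has
`p (1 - e^{-ε}) = (s - 1)² / (2 s)` and `C² - 1 = 4 s / (s - 1)²`, whose product is `2`. -/

open Set MeasureTheory

theorem intervalIntegrable_id_mul_of_eqOn_uIoo {f : ℝ → ℝ} {a b c : ℝ}
    (h : EqOn f (fun _ => c) (uIoo a b)) :
    IntervalIntegrable (fun x => x * f x) volume a b :=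
  (intervalIntegral.intervalIntegrable_id.mul_const c).congr_uIoo fun x hx => by
    simp only [h hx]

theorem integral_id_mul_of_eqOn_uIoo {f : ℝ → ℝ} {a b c : ℝ}
    (h : EqOn f (fun _ => c) (uIoo a b)) :
    ∫ x in a..b, x * f x = c * (b ^ 2 - a ^ 2) / 2 := by
  rw [intervalIntegral.integral_congr_uIoo (g := fun x => x * c) fun x hx => by simp only [h hx],
    intervalIntegral.integral_mul_const, integral_id]
  ring

theorem integral_id_mul_step {a b c d u v : ℝ} (hab : a ≤ b) (hbc : b ≤ c) (hcd : c ≤ d) :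
    ∫ x in a..d, x * (if b ≤ x ∧ x ≤ c then u else if a ≤ x ∧ x ≤ d then v else 0) =
      (v * (b ^ 2 - a ^ 2) + u * (c ^ 2 - b ^ 2) + v * (d ^ 2 - c ^ 2)) / 2 := by
  set f := fun x : ℝ => if b ≤ x ∧ x ≤ c then u else if a ≤ x ∧ x ≤ d then v else 0
  have left : EqOn f (fun _ => v) (uIoo a b) := by
    intro x hx
    rw [uIoo_of_le hab] at hx
    simp only [f, if_neg (fun h : b ≤ x ∧ x ≤ c => hx.2.not_ge h.1),
      if_pos (And.intro hx.1.le (by linarith [hx.2] : x ≤ d))]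
  have middle : EqOn f (fun _ => u) (uIoo b c) := by
    intro x hx
    rw [uIoo_of_le hbc] at hx
    simp only [f, if_pos (And.intro hx.1.le hx.2.le)]
  have right : EqOn f (fun _ => v) (uIoo c d) := by
    intro x hx
    rw [uIoo_of_le hcd] at hx
    simp only [f, if_neg (fun h : b ≤ x ∧ x ≤ c => hx.1.not_ge h.2),
      if_pos (And.intro (by linarith [hx.1] : a ≤ x) hx.2.le)]
  have hmiddle := intervalIntegrable_id_mul_of_eqOn_uIoo middle
  have hright := intervalIntegrable_id_mul_of_eqOn_uIoo right
  rw [← intervalIntegral.integral_add_adjacent_intervals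
      (intervalIntegrable_id_mul_of_eqOn_uIoo left) (hmiddle.trans hright),
    ← intervalIntegral.integral_add_adjacent_intervals hmiddle hright,
    integral_id_mul_of_eqOn_uIoo left, integral_id_mul_of_eqOn_uIoo middle,
    integral_id_mul_of_eqOn_uIoo right]
  ring

theorem one_lt_pmC {ε : ℝ} (hε : 0 < ε) : 1 < pmC ε := by
  have hs : 1 < exp (ε / 2) := one_lt_exp_iff.mpr (by positivity)
  rw [pmC, lt_div_iff₀ (by linarith)]
  linarith

theorem pmP_sub_mul_pmC_sq_sub_one {ε : ℝ} (hε : 0 < ε) :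
    (pmP ε - pmP ε / exp ε) * (pmC ε ^ 2 - 1) = 2 := by
  have hs : 1 < exp (ε / 2) := one_lt_exp_iff.mpr (by positivity)
  have hexp : exp ε = exp (ε / 2) ^ 2 := by rw [sq, ← exp_add, add_halves]
  rw [pmP, pmC, hexp]
  have : exp (ε / 2) - 1 ≠ 0 := by linarith
  field_simp
  ring

/-- The Piecewise Mechanism is unbiased: `∫_{-C}^{C} x · pdf(x | t) dx = t`. -/
theorem stmt_1 (ε : ℝ) (hε : 0 < ε) (t : ℝ) (ht : t ∈ Set.Icc (-1 : ℝ) 1) :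
    ∫ x in (-pmC ε)..(pmC ε), x * pmPdf ε t x = t := by
  obtain ⟨ht₁, ht₂⟩ := ht
  have hC := one_lt_pmC hε
  have hl : -pmC ε ≤ pmL ε t := by rw [pmL]; nlinarith
  have hlr : pmL ε t ≤ pmR ε t := by rw [pmR]; linarith
  have hr : pmR ε t ≤ pmC ε := by rw [pmR, pmL]; nlinarith
  calc ∫ x in (-pmC ε)..(pmC ε), x * pmPdf ε t x
      = (pmP ε - pmP ε / exp ε) * (pmR ε t ^ 2 - pmL ε t ^ 2) / 2 := by
        simp only [pmPdf]
        rw [integral_id_mul_step hl hlr hr]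
        ring
    _ = (pmP ε - pmP ε / exp ε) * (pmC ε ^ 2 - 1) * t / 2 := by
        rw [pmR, pmL]
        ring
    _ = t := by
        rw [pmP_sub_mul_pmC_sq_sub_one hε]
        ring
end

section
/- For every ε > 0 and every t ∈ [−1,1], the variance of the Piecewise Mechanism's output equals t²/(e^{ε/2}−1) + (e^{ε/2}+3)/(3(e^{ε/2}−1)²); that is, ∫_{−C}^{C} x² · pdf(x | t) dx − t² = t²/(e^{ε/2}−1) + (e^{ε/2}+3)/(3(e^{ε/2}−1)²). -/
open Real

open MeasureTheory

lemma myInt (a b c : ℝ) (hab : a ≤ b) (f : ℝ → ℝ)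
    (h : ∀ x ∈ Set.Ioo a b, f x = x ^ 2 * c) :
    IntervalIntegrable f volume a b := by
  rw [intervalIntegrable_iff_integrableOn_Ioc_of_le hab,
    integrableOn_Ioc_iff_integrableOn_Ioo]
  exact ((((continuous_pow 2).mul continuous_const).integrableOn_Icc.mono_set
    Set.Ioo_subset_Icc_self)).congr_fun (fun x hx => (h x hx).symm) measurableSet_Ioo

lemma myEq (a b c : ℝ) (hab : a ≤ b) (f : ℝ → ℝ)
    (h : ∀ x ∈ Set.Ioo a b, f x = x ^ 2 * c) :
    ∫ x in a..b, f x = (b ^ 3 - a ^ 3) / 3 * c := by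
  rw [intervalIntegral.integral_of_le hab, MeasureTheory.integral_Ioc_eq_integral_Ioo,
    MeasureTheory.setIntegral_congr_fun measurableSet_Ioo h,
    ← MeasureTheory.integral_Ioc_eq_integral_Ioo, ← intervalIntegral.integral_of_le hab,
    intervalIntegral.integral_mul_const, integral_pow]
  ring


/-- The variance of the Piecewise Mechanism's output equals
`t²/(e^{ε/2}−1) + (e^{ε/2}+3)/(3(e^{ε/2}−1)²)`. -/
theorem stmt_2 (ε : ℝ) (hε : 0 < ε) (t : ℝ) (ht : t ∈ Set.Icc (-1 : ℝ) 1) :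
    (∫ x in (-pmC ε)..(pmC ε), x ^ 2 * pmPdf ε t x) - t ^ 2 =
      t ^ 2 / (exp (ε / 2) - 1) + (exp (ε / 2) + 3) / (3 * (exp (ε / 2) - 1) ^ 2) := by
  obtain ⟨ht1, ht2⟩ := ht
  set s := exp (ε / 2) with hs
  have hs1 : 1 < s := by
    rw [hs]; nlinarith [Real.add_one_le_exp (ε / 2)]
  have hE : exp ε = s ^ 2 := by
    rw [hs, sq, ← exp_add]; congr 1; ring
  have hs0 : (0:ℝ) < s := by linarith
  have hC : pmC ε = (s + 1) / (s - 1) := rfl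
  have hC1 : 1 < pmC ε := by
    rw [hC, lt_div_iff₀ (by linarith)]; linarith
  have hCtop : pmC ε < 0 ∨ True := Or.inr trivial
  have hLR : pmL ε t ≤ pmR ε t := by
    rw [pmR]; linarith
  have hCL : -pmC ε ≤ pmL ε t := by
    rw [pmL]; nlinarith
  have hRC : pmR ε t ≤ pmC ε := by
    rw [pmR, pmL]; nlinarith
  have hP : pmP ε = s * (s - 1) / (2 * (s + 1)) := by
    rw [pmP, hE, ← hs]; ring_nf
  -- split the integral
  have i1 := myInt (-pmC ε) (pmL ε t) (pmP ε / exp ε) hCL (fun x => x ^ 2 * pmPdf ε t x)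
    (by intro x hx; simp only [pmPdf]
        rw [if_neg (by push_neg; intro hc; exact absurd hc (not_le.mpr hx.2)),
          if_pos ⟨hx.1.le, by linarith [hx.2]⟩])
  have i2 := myInt (pmL ε t) (pmR ε t) (pmP ε) hLR (fun x => x ^ 2 * pmPdf ε t x)
    (by intro x hx; simp only [pmPdf]; rw [if_pos ⟨hx.1.le, hx.2.le⟩])
  have i3 := myInt (pmR ε t) (pmC ε) (pmP ε / exp ε) hRC (fun x => x ^ 2 * pmPdf ε t x)
    (by intro x hx; simp only [pmPdf]
        rw [if_neg (by push_neg; intro hc; linarith [hx.1]),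
          if_pos ⟨by linarith [hx.1], hx.2.le⟩])
  have e1 := myEq (-pmC ε) (pmL ε t) (pmP ε / exp ε) hCL (fun x => x ^ 2 * pmPdf ε t x)
    (by intro x hx; simp only [pmPdf]
        rw [if_neg (by push_neg; intro hc; exact absurd hc (not_le.mpr hx.2)),
          if_pos ⟨hx.1.le, by linarith [hx.2]⟩])
  have e2 := myEq (pmL ε t) (pmR ε t) (pmP ε) hLR (fun x => x ^ 2 * pmPdf ε t x)
    (by intro x hx; simp only [pmPdf]; rw [if_pos ⟨hx.1.le, hx.2.le⟩])
  have e3 := myEq (pmR ε t) (pmC ε) (pmP ε / exp ε) hRC (fun x => x ^ 2 * pmPdf ε t x)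
    (by intro x hx; simp only [pmPdf]
        rw [if_neg (by push_neg; intro hc; linarith [hx.1]),
          if_pos ⟨by linarith [hx.1], hx.2.le⟩])
  have hsplit1 := intervalIntegral.integral_add_adjacent_intervals i1 i2
  have hsplit2 := intervalIntegral.integral_add_adjacent_intervals (i1.trans i2) i3
  rw [← hsplit2, ← hsplit1, e1, e2, e3, hE, hP, hC, pmR, pmL, hC]
  have h1 : s - 1 ≠ 0 := by linarith
  have h2 : s + 1 ≠ 0 := by linarith
  have h3 : s ≠ 0 := by linarith
  field_simp
  ring
end

section
/- For every ε > 0, the worst-case noise variance of the Piecewise Mechanism is strictly smaller than that of the Laplace mechanism: 4e^{ε/2}/(3(e^{ε/2}−1)²) < 8/ε². -/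
open Real

lemma sinh_aux (ε : ℝ) (hε : 0 < ε) :
    ε / 2 * exp (ε / 4) < exp (ε / 2) - 1 := by
  have h := Real.self_lt_sinh_iff.mpr (by linarith : (0:ℝ) < ε / 4)
  rw [Real.sinh_eq] at h
  have hu : (0:ℝ) < exp (ε / 4) := Real.exp_pos _
  have hneg : exp (-(ε / 4)) = 1 / exp (ε / 4) := by
    rw [Real.exp_neg]; field_simp
  rw [hneg] at h
  have hsq : exp (ε / 2) = exp (ε / 4) ^ 2 := by
    rw [← Real.exp_nat_mul]; ring_nf
  rw [hsq]
  have key : (1 / exp (ε / 4)) * exp (ε / 4) = 1 := by field_simp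
  have h2 : ε / 4 * exp (ε / 4) < (exp (ε / 4) ^ 2 - 1) / 2 := by
    nlinarith [mul_lt_mul_of_pos_right h hu]
  nlinarith

/-- The worst-case noise variance of the Piecewise Mechanism is strictly smaller than
that of the Laplace mechanism: `4e^{ε/2}/(3(e^{ε/2}−1)²) < 8/ε²` for every `ε > 0`. -/
theorem stmt_4 (ε : ℝ) (hε : 0 < ε) :
    4 * exp (ε / 2) / (3 * (exp (ε / 2) - 1) ^ 2) < 8 / ε ^ 2 := by
  have h := sinh_aux ε hε
  have hu : (0:ℝ) < exp (ε / 4) := Real.exp_pos _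
  have h1 : (1:ℝ) < exp (ε / 2) := by
    exact Real.one_lt_exp_iff.mpr (by linarith)
  have hsq : exp (ε / 2) = exp (ε / 4) ^ 2 := by
    rw [← Real.exp_nat_mul]; ring_nf
  have hd1 : 0 < 3 * (exp (ε / 2) - 1) ^ 2 := by nlinarith
  have hd2 : 0 < ε ^ 2 := by positivity
  rw [div_lt_div_iff₀ hd1 hd2]
  -- need 4 e^{ε/2} ε² < 8 · 3 (e^{ε/2}-1)²
  nlinarith [sq_nonneg (exp (ε / 2) - 1 - ε / 2 * exp (ε / 4)), mul_pos hε hu, sq_nonneg ε, hsq]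
end

section
/- For every ε > 0, (e^{ε/2}+3)/(3(e^{ε/2}−1)²) − ((e^ε+1)/(e^ε−1))² + e^{ε/2}/(e^{ε/2}−1) > 0. -/
open Real

/-- First auxiliary inequality for the Hybrid Mechanism analysis:
`(e^{ε/2}+3)/(3(e^{ε/2}−1)²) − ((e^ε+1)/(e^ε−1))² + e^{ε/2}/(e^{ε/2}−1) > 0` for `ε > 0`. -/
theorem stmt_8 (ε : ℝ) (hε : 0 < ε) :
    0 < (exp (ε / 2) + 3) / (3 * (exp (ε / 2) - 1) ^ 2) -
        ((exp ε + 1) / (exp ε - 1)) ^ 2 + exp (ε / 2) / (exp (ε / 2) - 1) := by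
  have ht : 1 < exp (ε / 2) := by
    have := exp_lt_exp.mpr (show (0:ℝ) < ε / 2 by linarith)
    simpa using this
  set t := exp (ε / 2) with htdef
  have he : exp ε = t ^ 2 := by
    rw [show ε = ε / 2 + ε / 2 by ring, exp_add, htdef]; ring
  rw [he]
  have h1 : (0:ℝ) < t - 1 := by linarith
  have h2 : (0:ℝ) < t + 1 := by linarith
  have h3 : t ^ 2 - 1 ≠ 0 := by nlinarith
  have key : (t + 3) / (3 * (t - 1) ^ 2) - ((t ^ 2 + 1) / (t ^ 2 - 1)) ^ 2 + t / (t - 1)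
      = (4 * t * (t ^ 2 - t + 1)) / (3 * (t - 1) ^ 2 * (t + 1) ^ 2) := by
    field_simp
    ring
  rw [key]
  apply div_pos
  · nlinarith
  · positivity
end
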